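/- Under the adaptive-stencil mesh setup, assume u_{i+1} ≠ u_i, that both data values u_i and u_{i+1} are strictly positive, and let ε₀ ∈ [0,1] and ε₁ ≥ 0. Set u_min = (1 − ε₀)·min(u_i, u_{i+1}) and u_max = (1 + ε₁)·max(u_i, u_{i+1}), and define mℓ, mr and the bound sequences B_j^−, B_j^+ as in the positivity-preserving recursion (B_1^− = (−4(mr−1) − 1)·d_1, B_1^+ = (−4·mℓ + 1)·d_1, with the recursion branching on t_j ≤ 0 or t_j ≥ 1). If B_j^− ≤ λ̄_j ≤ B_j^+ for every 1 ≤ j ≤ n−1, then U_n(x) ≥ (1 − ε₀)·min(u_i, u_{i+1}) ≥ 0 for every x ∈ [x_i, x_{i+1}]; in particular the interpolant is nonnegative on the base interval. -/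

import Mathlib

/-- Divided differences over consecutive nodes: `divdiff x u k m = U[x_k, …, x_{k+m}]`. -/
noncomputable def divdiff (x u : ℕ → ℝ) : ℕ → ℕ → ℝ
  | k, 0 => u k
  | k, m + 1 => (divdiff x u (k + 1) m - divdiff x u k m) / (x (k + m + 1) - x k)

/-- `stMin e j = min{e_0, …, e_j}`. -/
def stMin (e : ℕ → ℕ) (j : ℕ) : ℕ := (Finset.range (j + 1)).inf' Finset.nonempty_range_add_one e

/-- `stMax e j = max{e_0, …, e_j}`. -/
def stMax (e : ℕ → ℕ) (j : ℕ) : ℕ := (Finset.range (j + 1)).sup' Finset.nonempty_range_add_one e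

/-- `U[V_j]`: the divided difference over the consecutive nodes of the stencil
`V_j = {e_0, …, e_{j+1}}`, from its leftmost node `x_j^l` to its rightmost node `x_j^r`. -/
noncomputable def UV (x u : ℕ → ℝ) (e : ℕ → ℕ) (j : ℕ) : ℝ :=
  divdiff x u (stMin e (j + 1)) (stMax e (j + 1) - stMin e (j + 1))

/-- The Newton interpolant of degree `n` on the adaptive stencil:
`U_n(y) = u_i + Σ_{j=0}^{n−1} U[V_j] · Π_{k=0}^{j} (y − x_{e_k})`. -/
noncomputable def Un (x u : ℕ → ℝ) (e : ℕ → ℕ) (i n : ℕ) (y : ℝ) : ℝ :=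
  u i + ∑ j ∈ Finset.range n, UV x u e j * ∏ k ∈ Finset.range (j + 1), (y - x (e k))

/-- Normalized stencil width `d_j = (x_j^r − x_j^l)/(x_{i+1} − x_i)`. -/
noncomputable def dN (x : ℕ → ℝ) (e : ℕ → ℕ) (i j : ℕ) : ℝ :=
  (x (stMax e (j + 1)) - x (stMin e (j + 1))) / (x (i + 1) - x i)

/-- Normalized position `t_j = (x_{e_j} − x_i)/(x_{i+1} − x_i)` of the added stencil point. -/
noncomputable def tN (x : ℕ → ℝ) (e : ℕ → ℕ) (i j : ℕ) : ℝ :=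
  (x (e j) - x i) / (x (i + 1) - x i)

/-- Scaled divided-difference ratio
`λ̄_j = (U[V_j]/U[x_i, x_{i+1}]) · Π_{k=1}^{j} (x_k^r − x_k^l)`. -/
noncomputable def lamBar (x u : ℕ → ℝ) (e : ℕ → ℕ) (i j : ℕ) : ℝ :=
  (UV x u e j / divdiff x u i 1) *
    ∏ k ∈ Finset.Icc 1 j, (x (stMax e (k + 1)) - x (stMin e (k + 1)))

/-- The expanded normalized Newton form
`S_n(s) = s + Σ_{j=1}^{n−1} (λ̄_j / (d_1⋯d_j)) · s·(s−1) · Π_{k=2}^{j} (s − t_k)`. -/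
noncomputable def Sn (n : ℕ) (d t lam : ℕ → ℝ) (s : ℝ) : ℝ :=
  s + ∑ j ∈ Finset.Icc 1 (n - 1),
    (lam j / ∏ k ∈ Finset.Icc 1 j, d k) * (s * (s - 1)) * ∏ k ∈ Finset.Icc 2 j, (s - t k)

/-!
With `s = (y − x_i)/(x_{i+1} − x_i) ∈ [0,1]` one has `U_n(y) = u_i + (u_{i+1} − u_i) S_n(s)`, and
Horner's scheme gives `S_n(s) = s + s(s − 1) W_1/d_1` with `W_{n−1} = λ̄_{n−1}` and
`W_j = λ̄_j + ((s − t_{j+1})/d_{j+1}) W_{j+1}`. Every added node lies outside the base interval,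
so `(s − t)/(1 − t)` (for `t ≤ 0`), resp. `(t − s)/t` (for `t ≥ 1`), lies in `[0,1]`; this is
exactly what lets the recursion for `B_j^±` propagate `W_j ∈ [B_j^−, B_j^+]` down from
`j = n − 1` to `j = 1`. There `q = W_1/d_1 ∈ [−4(mr − 1) − 1, −4mℓ + 1]`, and for such `q` the
quadratic `s + s(s − 1) q` stays in `[mℓ, mr]` on `[0,1]`, the slack being
`s² − mℓ(2s − 1)²`, resp. `(mr − 1)(2s − 1)² + (1 − s)²`. The choice of `mℓ`, `mr` turns this
into `U_n(y) ≥ u_min`.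
-/

open Finset

section Stencil

variable {N i : ℕ} {x : ℕ → ℝ} {e : ℕ → ℕ}

theorem stMin_le (e : ℕ → ℕ) {j k : ℕ} (h : k ≤ j) : stMin e j ≤ e k :=
  inf'_le _ (mem_range.2 (Nat.lt_succ_of_le h))

theorem le_stMax (e : ℕ → ℕ) {j k : ℕ} (h : k ≤ j) : e k ≤ stMax e j :=
  le_sup' _ (mem_range.2 (Nat.lt_succ_of_le h))

theorem stMax_le {j m : ℕ} (h : ∀ k ≤ j, e k ≤ m) : stMax e j ≤ m :=
  sup'_le _ _ fun k hk => h k (Nat.lt_succ_iff.1 (mem_range.1 hk))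

theorem dN_pos (hx : StrictMonoOn x (Set.Iic N)) (he0 : e 0 = i) (he1 : e 1 = i + 1) {j : ℕ}
    (hN : stMax e (j + 1) ≤ N) : 0 < dN x e i j := by
  have hl : stMin e (j + 1) ≤ i := he0 ▸ stMin_le e (Nat.zero_le _)
  have hr : i + 1 ≤ stMax e (j + 1) := he1 ▸ le_stMax e (by omega)
  exact div_pos (sub_pos.2 (hx (by simp; omega) (by simpa using hN) (by omega)))
    (sub_pos.2 (hx (by simp; omega) (by simp; omega) (by omega)))

theorem tN_nonpos_or_one_le (hx : StrictMonoOn x (Set.Iic N)) (hiN : i + 1 ≤ N)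
    (he0 : e 0 = i) (he1 : e 1 = i + 1) {j : ℕ} (hj : 2 ≤ j) (hejN : e j ≤ N)
    (hstep : e j + 1 = stMin e (j - 1) ∨ e j = stMax e (j - 1) + 1) :
    tN x e i j ≤ 0 ∨ 1 ≤ tN x e i j := by
  have hΔ : 0 < x (i + 1) - x i := sub_pos.2 (hx (by simp; omega) (by simpa using hiN) (by omega))
  rcases hstep with h | h
  · have : e j < i := by have := he0 ▸ stMin_le e (Nat.zero_le (j - 1)); omega
    refine Or.inl (div_nonpos_of_nonpos_of_nonneg ?_ hΔ.le)
    exact sub_nonpos.2 (hx.monotoneOn (by simp; omega) (by simp; omega) this.le)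
  · have : i + 1 < e j := by have := he1 ▸ le_stMax e (show 1 ≤ j - 1 by omega); omega
    refine Or.inr ((one_le_div hΔ).2 (sub_le_sub_right ?_ _))
    exact hx.monotoneOn (by simpa using hiN) (by simpa using hejN) this.le

end Stencil

section Normalization

variable {i : ℕ} {x u : ℕ → ℝ} {e : ℕ → ℕ}

theorem divdiff_one (x u : ℕ → ℝ) (k : ℕ) :
    divdiff x u k 1 = (u (k + 1) - u k) / (x (k + 1) - x k) := by
  simp [divdiff]

theorem UV_zero (he0 : e 0 = i) (he1 : e 1 = i + 1) : UV x u e 0 = divdiff x u i 1 := by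
  simp [UV, stMin, stMax, range_add_one, inf'_insert, sup'_insert, he0, he1]

theorem prod_range_sub_eq (hx : x (i + 1) ≠ x i) (he0 : e 0 = i) (he1 : e 1 = i + 1)
    (y : ℝ) {m : ℕ} (hm : 1 ≤ m) :
    ∏ k ∈ range (m + 1), (y - x (e k)) = (x (i + 1) - x i) ^ (m + 1) *
      (((y - x i) / (x (i + 1) - x i)) * ((y - x i) / (x (i + 1) - x i) - 1) *
        ∏ k ∈ Icc 2 m, ((y - x i) / (x (i + 1) - x i) - tN x e i k)) := by
  have hsub : ∀ k,
      y - x (e k) = (x (i + 1) - x i) * ((y - x i) / (x (i + 1) - x i) - tN x e i k) := by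
    intro k; rw [tN]; field_simp; ring
  have hrange : range (m + 1) = insert 0 (insert 1 (Icc 2 m)) := by
    ext k; simp only [mem_range, mem_insert, mem_Icc]; omega
  rw [prod_congr rfl fun k _ => hsub k, prod_mul_distrib, prod_const, card_range, hrange,
    prod_insert (by simp), prod_insert (by simp), tN, tN, he0, he1, sub_self, zero_div, sub_zero,
    div_self (sub_ne_zero.2 hx), mul_assoc]

theorem lamBar_div_prod_dN {m : ℕ} (hd : ∏ k ∈ Icc 1 m, dN x e i k ≠ 0) :
    lamBar x u e i m / ∏ k ∈ Icc 1 m, dN x e i k =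
      UV x u e m / divdiff x u i 1 * (x (i + 1) - x i) ^ m := by
  have hprod : ∏ k ∈ Icc 1 m, dN x e i k =
      (∏ k ∈ Icc 1 m, (x (stMax e (k + 1)) - x (stMin e (k + 1)))) / (x (i + 1) - x i) ^ m := by
    simp only [dN, prod_div_distrib, prod_const, Nat.card_Icc, Nat.add_sub_cancel]
  obtain ⟨hP, hΔ⟩ := div_ne_zero_iff.1 (hprod ▸ hd)
  rw [hprod, lamBar]
  field_simp

theorem Un_eq_Sn {n : ℕ} (hn : 1 ≤ n) (hx : x (i + 1) ≠ x i) (hu : u (i + 1) ≠ u i)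
    (he0 : e 0 = i) (he1 : e 1 = i + 1) (hd : ∀ k ∈ Icc 1 (n - 1), dN x e i k ≠ 0) (y : ℝ) :
    Un x u e i n y = u i + (u (i + 1) - u i) *
      Sn n (dN x e i) (tN x e i) (lamBar x u e i) ((y - x i) / (x (i + 1) - x i)) := by
  have hΔ : x (i + 1) - x i ≠ 0 := sub_ne_zero.2 hx
  have hD : divdiff x u i 1 ≠ 0 := by
    rw [divdiff_one]; exact div_ne_zero (sub_ne_zero.2 hu) hΔ
  have hrange : range n = insert 0 (Icc 1 (n - 1)) := by
    ext k; simp only [mem_range, mem_insert, mem_Icc]; omega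
  rw [Un, Sn, hrange, sum_insert (by simp), mul_add, mul_sum]
  congr 2
  · rw [UV_zero he0 he1, divdiff_one, zero_add, prod_range_one, he0]
    field_simp
  · refine sum_congr rfl fun m hm => ?_
    have hdm : ∏ k ∈ Icc 1 m, dN x e i k ≠ 0 :=
      prod_ne_zero_iff.2 fun k hk => hd k (Icc_subset_Icc_right (mem_Icc.1 hm).2 hk)
    rw [prod_range_sub_eq hx he0 he1 y (mem_Icc.1 hm).1, lamBar_div_prod_dN hdm]
    rw [divdiff_one] at hD ⊢
    field_simp
    ring

end Normalization

/-- `newtonTail (n - 1) d t lam s j` is the Horner tail `W_j` of `S_n(s)`. -/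
noncomputable def newtonTail (L : ℕ) (d t lam : ℕ → ℝ) (s : ℝ) (j : ℕ) : ℝ :=
  ∑ m ∈ Icc j L, lam m * ∏ k ∈ Icc (j + 1) m, (s - t k) / d k

section NewtonTail

variable {L : ℕ} {d t lam : ℕ → ℝ} {s : ℝ}

theorem newtonTail_self : newtonTail L d t lam s L = lam L := by
  simp [newtonTail]

theorem newtonTail_eq_add {j : ℕ} (hj : j < L) :
    newtonTail L d t lam s j =
      lam j + (s - t (j + 1)) / d (j + 1) * newtonTail L d t lam s (j + 1) := by
  rw [newtonTail, ← insert_Icc_add_one_left_eq_Icc hj.le, sum_insert (by simp),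
    Icc_eq_empty (by omega), prod_empty, mul_one, newtonTail, mul_sum]
  congr 1
  refine sum_congr rfl fun m hm => ?_
  rw [← insert_Icc_add_one_left_eq_Icc (mem_Icc.1 hm).1, prod_insert (by simp)]
  ring

theorem Sn_eq_newtonTail {n : ℕ} (hd : ∀ k ∈ Icc 1 (n - 1), d k ≠ 0) :
    Sn n d t lam s = s + s * (s - 1) * (newtonTail (n - 1) d t lam s 1 / d 1) := by
  rw [Sn, newtonTail, sum_div, mul_sum]
  congr 1
  refine sum_congr rfl fun m hm => ?_
  have hm1 := (mem_Icc.1 hm).1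
  rw [← insert_Icc_add_one_left_eq_Icc hm1, prod_insert (by simp), prod_div_distrib]
  have h1 : d 1 ≠ 0 := hd 1 (mem_Icc.2 ⟨le_rfl, hm1.trans (mem_Icc.1 hm).2⟩)
  have h2 : ∏ k ∈ Icc 2 m, d k ≠ 0 := prod_ne_zero_iff.2 fun k hk =>
    hd k (mem_Icc.2 ⟨by linarith [(mem_Icc.1 hk).1], (mem_Icc.1 hk).2.trans (mem_Icc.1 hm).2⟩)
  field_simp

end NewtonTail

theorem add_div_mul_mem_Icc_of_nonpos {bm bp l w s t d : ℝ} (hs : s ∈ Set.Icc (0 : ℝ) 1)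
    (ht : t ≤ 0) (hd : 0 < d) (hl : l ∈ Set.Icc bm bp)
    (hw : w ∈ Set.Icc ((bm - l) * d / (1 - t)) ((bp - l) * d / (1 - t))) :
    l + (s - t) / d * w ∈ Set.Icc bm bp := by
  obtain ⟨hs0, hs1⟩ := hs
  have hc : 0 ≤ (s - t) / d := div_nonneg (by linarith) hd.le
  have hρ : ∀ b, (s - t) / d * ((b - l) * d / (1 - t)) = (s - t) / (1 - t) * (b - l) := by
    intro b; field_simp
  have hρ0 : 0 ≤ (s - t) / (1 - t) := div_nonneg (by linarith) (by linarith)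
  have hρ1 : (s - t) / (1 - t) ≤ 1 := div_le_one_of_le₀ (by linarith) (by linarith)
  have h1 := mul_le_mul_of_nonneg_left hw.1 hc
  have h2 := mul_le_mul_of_nonneg_left hw.2 hc
  rw [hρ] at h1 h2
  constructor
  · nlinarith [mul_nonneg (sub_nonneg.2 hρ1) (sub_nonneg.2 hl.1)]
  · nlinarith [mul_nonneg (sub_nonneg.2 hρ1) (sub_nonneg.2 hl.2)]

theorem add_div_mul_mem_Icc_of_one_le {bm bp l w s t d : ℝ} (hs : s ∈ Set.Icc (0 : ℝ) 1)
    (ht : 1 ≤ t) (hd : 0 < d) (hl : l ∈ Set.Icc bm bp)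
    (hw : w ∈ Set.Icc ((bp - l) * d / -t) ((bm - l) * d / -t)) :
    l + (s - t) / d * w ∈ Set.Icc bm bp := by
  obtain ⟨hs0, hs1⟩ := hs
  have hc : (s - t) / d ≤ 0 := div_nonpos_of_nonpos_of_nonneg (by linarith) hd.le
  have hρ : ∀ b, (s - t) / d * ((b - l) * d / -t) = (t - s) / t * (b - l) := by
    intro b; field_simp; ring
  have hρ0 : 0 ≤ (t - s) / t := div_nonneg (by linarith) (by linarith)
  have hρ1 : (t - s) / t ≤ 1 := div_le_one_of_le₀ (by linarith) (by linarith)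
  have h1 := mul_le_mul_of_nonpos_left hw.1 hc
  have h2 := mul_le_mul_of_nonpos_left hw.2 hc
  rw [hρ] at h1 h2
  constructor
  · nlinarith [mul_nonneg (sub_nonneg.2 hρ1) (sub_nonneg.2 hl.1)]
  · nlinarith [mul_nonneg (sub_nonneg.2 hρ1) (sub_nonneg.2 hl.2)]

theorem newtonTail_mem_Icc {L : ℕ} {d t lam Bm Bp : ℕ → ℝ} {s : ℝ}
    (hs : s ∈ Set.Icc (0 : ℝ) 1)
    (hd : ∀ j, 2 ≤ j → j ≤ L → 0 < d j) (ht : ∀ j, 2 ≤ j → j ≤ L → t j ≤ 0 ∨ 1 ≤ t j)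
    (hB : ∀ j, 2 ≤ j → j ≤ L →
      (t j ≤ 0 →
        Bm j = (Bm (j - 1) - lam (j - 1)) * d j / (1 - t j) ∧
        Bp j = (Bp (j - 1) - lam (j - 1)) * d j / (1 - t j)) ∧
      (1 ≤ t j →
        Bm j = (Bp (j - 1) - lam (j - 1)) * d j / (-t j) ∧
        Bp j = (Bm (j - 1) - lam (j - 1)) * d j / (-t j)))
    (hlam : ∀ j, 1 ≤ j → j ≤ L → Bm j ≤ lam j ∧ lam j ≤ Bp j)
    {j : ℕ} (hj : 1 ≤ j) (hjL : j ≤ L) :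
    newtonTail L d t lam s j ∈ Set.Icc (Bm j) (Bp j) := by
  induction hjL using Nat.decreasingInduction with
  | self => rw [newtonTail_self]; exact hlam L hj le_rfl
  | of_succ j hjL ih =>
    have hw := ih (by omega)
    have hl := hlam j hj hjL.le
    have hB' := hB (j + 1) (by omega) hjL
    rw [Nat.add_sub_cancel] at hB'
    rw [newtonTail_eq_add hjL]
    rcases ht (j + 1) (by omega) hjL with htj | htj
    · obtain ⟨hBm, hBp⟩ := hB'.1 htj
      rw [hBm, hBp] at hw
      exact add_div_mul_mem_Icc_of_nonpos hs htj (hd _ (by omega) hjL) hl hw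
    · obtain ⟨hBm, hBp⟩ := hB'.2 htj
      rw [hBm, hBp] at hw
      exact add_div_mul_mem_Icc_of_one_le hs htj (hd _ (by omega) hjL) hl hw

theorem le_add_mul_of_le {ml q s : ℝ} (hs : s ∈ Set.Icc (0 : ℝ) 1) (hml : ml ≤ 0)
    (hq : q ≤ -4 * ml + 1) : ml ≤ s + s * (s - 1) * q := by
  have hss : s * (s - 1) ≤ 0 := mul_nonpos_of_nonneg_of_nonpos hs.1 (by linarith [hs.2])
  nlinarith [mul_le_mul_of_nonpos_left hq hss,
    mul_nonneg (neg_nonneg.2 hml) (sq_nonneg (2 * s - 1))]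

theorem add_mul_le_of_le {mr q s : ℝ} (hs : s ∈ Set.Icc (0 : ℝ) 1) (hmr : 1 ≤ mr)
    (hq : -4 * (mr - 1) - 1 ≤ q) : s + s * (s - 1) * q ≤ mr := by
  have hss : s * (s - 1) ≤ 0 := mul_nonpos_of_nonneg_of_nonpos hs.1 (by linarith [hs.2])
  nlinarith [mul_le_mul_of_nonpos_left hq hss,
    mul_nonneg (sub_nonneg.2 hmr) (sq_nonneg (2 * s - 1)), sq_nonneg (1 - s)]

theorem le_add_sub_mul {a b c ml mr S : ℝ} (hab : b ≠ a) (hc : c ≤ min a b)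
    (hml : a < b → ml = min 0 ((c - a) / (b - a))) (hmr : b < a → mr = max 1 ((c - a) / (b - a)))
    (hS : S ∈ Set.Icc ml mr) : c ≤ a + (b - a) * S := by
  rcases hab.lt_or_gt with h | h
  · have hba : b - a < 0 := by linarith
    have hr : 1 ≤ (c - a) / (b - a) := by
      rw [le_div_iff_of_neg hba]; linarith [min_le_right a b]
    have := hmr h ▸ hS.2
    rw [max_eq_right hr, le_div_iff_of_neg hba] at this
    linarith
  · have hba : 0 < b - a := by linarith
    have hr : (c - a) / (b - a) ≤ 0 :=
      div_nonpos_of_nonpos_of_nonneg (by linarith [min_le_left a b]) hba.le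
    have := hml h ▸ hS.1
    rw [min_eq_right hr, div_le_iff₀ hba] at this
    linarith

theorem ppi_interpolant_nonneg_general
    (N n i : ℕ) (hn : 2 ≤ n)
    (x u : ℕ → ℝ)
    (hx : ∀ k, k < N → x k < x (k + 1))
    (e : ℕ → ℕ)
    (he0 : e 0 = i) (he1 : e 1 = i + 1)
    (heN : ∀ j, j ≤ n → e j ≤ N)
    (heStep : ∀ j, 2 ≤ j → j ≤ n →
      e j + 1 = stMin e (j - 1) ∨ e j = stMax e (j - 1) + 1)
    (hu : u (i + 1) ≠ u i)
    (hui : 0 < u i) (hui1 : 0 < u (i + 1))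
    (eps0 : ℝ) (heps0 : 0 ≤ eps0) (heps0' : eps0 ≤ 1)
    (umin umax ml mr : ℝ)
    (humin : umin = (1 - eps0) * min (u i) (u (i + 1)))
    (hm₁ : u i < u (i + 1) →
      ml = min 0 ((umin - u i) / (u (i + 1) - u i)) ∧
      mr = max 1 ((umax - u i) / (u (i + 1) - u i)))
    (hm₂ : u (i + 1) < u i →
      ml = min 0 ((umax - u i) / (u (i + 1) - u i)) ∧
      mr = max 1 ((umin - u i) / (u (i + 1) - u i)))
    (Bm Bp : ℕ → ℝ)
    (hBm1 : Bm 1 = (-4 * (mr - 1) - 1) * dN x e i 1)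
    (hBp1 : Bp 1 = (-4 * ml + 1) * dN x e i 1)
    (hBrec : ∀ j, 2 ≤ j → j ≤ n - 1 →
      (tN x e i j ≤ 0 →
        Bm j = (Bm (j - 1) - lamBar x u e i (j - 1)) * dN x e i j / (1 - tN x e i j) ∧
        Bp j = (Bp (j - 1) - lamBar x u e i (j - 1)) * dN x e i j / (1 - tN x e i j)) ∧
      (1 ≤ tN x e i j →
        Bm j = (Bp (j - 1) - lamBar x u e i (j - 1)) * dN x e i j / (-tN x e i j) ∧
        Bp j = (Bm (j - 1) - lamBar x u e i (j - 1)) * dN x e i j / (-tN x e i j)))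
    (hlam : ∀ j, 1 ≤ j → j ≤ n - 1 →
      Bm j ≤ lamBar x u e i j ∧ lamBar x u e i j ≤ Bp j)
    :
    ∀ y ∈ Set.Icc (x i) (x (i + 1)),
      (1 - eps0) * min (u i) (u (i + 1)) ≤ Un x u e i n y ∧
        (0 : ℝ) ≤ (1 - eps0) * min (u i) (u (i + 1)) := by
  intro y hy
  have hiN : i + 1 ≤ N := he1 ▸ heN 1 (by omega)
  have hxN : StrictMonoOn x (Set.Iic N) := strictMonoOn_Iic_of_lt_succ hx
  have hΔ : 0 < x (i + 1) - x i := sub_pos.2 (hx i hiN)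
  have hs : (y - x i) / (x (i + 1) - x i) ∈ Set.Icc (0 : ℝ) 1 :=
    ⟨div_nonneg (by linarith [hy.1]) hΔ.le, (div_le_one hΔ).2 (by linarith [hy.2])⟩
  have hd : ∀ j ≤ n - 1, 0 < dN x e i j := fun j hj =>
    dN_pos hxN he0 he1 (stMax_le fun k hk => heN k (by omega))
  have hW := newtonTail_mem_Icc hs (fun j _ hj => hd j hj)
    (fun j hj hjn => tN_nonpos_or_one_le hxN hiN he0 he1 hj (heN j (by omega))
      (heStep j hj (by omega))) hBrec hlam le_rfl (by omega)
  rw [hBm1, hBp1] at hW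
  have hmlr : ml ≤ 0 ∧ 1 ≤ mr := by
    rcases hu.lt_or_gt with h | h
    · obtain ⟨rfl, rfl⟩ := hm₂ h; exact ⟨min_le_left _ _, le_max_left _ _⟩
    · obtain ⟨rfl, rfl⟩ := hm₁ h; exact ⟨min_le_left _ _, le_max_left _ _⟩
  have hd1 := hd 1 (by omega)
  have hS := And.intro (le_add_mul_of_le hs hmlr.1 ((div_le_iff₀ hd1).2 hW.2))
    (add_mul_le_of_le hs hmlr.2 ((le_div_iff₀ hd1).2 hW.1))
  have hmin : 0 ≤ min (u i) (u (i + 1)) := le_min hui.le hui1.le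
  refine ⟨?_, mul_nonneg (by linarith) hmin⟩
  have hd' : ∀ k ∈ Icc 1 (n - 1), dN x e i k ≠ 0 := fun k hk => (hd k (mem_Icc.1 hk).2).ne'
  rw [← humin, Un_eq_Sn (by omega) (sub_pos.1 hΔ).ne' hu he0 he1 hd', Sn_eq_newtonTail hd']
  exact le_add_sub_mul hu (humin ▸ mul_le_of_le_one_left hmin (by linarith))
    (fun h => (hm₁ h).1) (fun h => (hm₂ h).2) hS

/-- Positivity of the PPI interpolant: with strictly positive data values, bounds
`u_min = (1 − ε₀)·min(u_i, u_{i+1})`, `u_max = (1 + ε₁)·max(u_i, u_{i+1})` with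
`ε₀ ∈ [0,1]`, `ε₁ ≥ 0`, and the PPI bound recursion satisfied, the interpolant satisfies
`U_n(x) ≥ (1 − ε₀)·min(u_i, u_{i+1}) ≥ 0` on the base interval. -/
theorem ppi_interpolant_nonneg
    (N n i : ℕ) (hn : 2 ≤ n) (hiN : i + 1 ≤ N)
    (x u : ℕ → ℝ)
    (hx : ∀ k, k < N → x k < x (k + 1))
    (e : ℕ → ℕ)
    (he0 : e 0 = i) (he1 : e 1 = i + 1)
    (heN : ∀ j, j ≤ n → e j ≤ N)
    (heStep : ∀ j, 2 ≤ j → j ≤ n →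
      e j + 1 = stMin e (j - 1) ∨ e j = stMax e (j - 1) + 1)
    (hu : u (i + 1) ≠ u i)
    (hui : 0 < u i) (hui1 : 0 < u (i + 1))
    (eps0 eps1 : ℝ) (heps0 : 0 ≤ eps0) (heps0' : eps0 ≤ 1) (heps1 : 0 ≤ eps1)
    (umin umax ml mr : ℝ)
    (humin : umin = (1 - eps0) * min (u i) (u (i + 1)))
    (humax : umax = (1 + eps1) * max (u i) (u (i + 1)))
    (hm₁ : u i < u (i + 1) →
      ml = min 0 ((umin - u i) / (u (i + 1) - u i)) ∧
      mr = max 1 ((umax - u i) / (u (i + 1) - u i)))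
    (hm₂ : u (i + 1) < u i →
      ml = min 0 ((umax - u i) / (u (i + 1) - u i)) ∧
      mr = max 1 ((umin - u i) / (u (i + 1) - u i)))
    (Bm Bp : ℕ → ℝ)
    (hBm1 : Bm 1 = (-4 * (mr - 1) - 1) * dN x e i 1)
    (hBp1 : Bp 1 = (-4 * ml + 1) * dN x e i 1)
    (hBrec : ∀ j, 2 ≤ j → j ≤ n - 1 →
      (tN x e i j ≤ 0 →
        Bm j = (Bm (j - 1) - lamBar x u e i (j - 1)) * dN x e i j / (1 - tN x e i j) ∧
        Bp j = (Bp (j - 1) - lamBar x u e i (j - 1)) * dN x e i j / (1 - tN x e i j)) ∧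
      (1 ≤ tN x e i j →
        Bm j = (Bp (j - 1) - lamBar x u e i (j - 1)) * dN x e i j / (-tN x e i j) ∧
        Bp j = (Bm (j - 1) - lamBar x u e i (j - 1)) * dN x e i j / (-tN x e i j)))
    (hlam : ∀ j, 1 ≤ j → j ≤ n - 1 →
      Bm j ≤ lamBar x u e i j ∧ lamBar x u e i j ≤ Bp j)
    :
    ∀ y ∈ Set.Icc (x i) (x (i + 1)),
      (1 - eps0) * min (u i) (u (i + 1)) ≤ Un x u e i n y ∧
        (0 : ℝ) ≤ (1 - eps0) * min (u i) (u (i + 1)) :=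
  ppi_interpolant_nonneg_general N n i hn x u hx e he0 he1 heN heStep hu hui hui1 eps0 heps0 heps0'
    umin umax ml mr humin hm₁ hm₂ Bm Bp hBm1 hBp1 hBrec hlam
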